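/- In the standing setup, with f: A → C surjective, define α'_X = Σ_{n≥0} 2^{−n−1} α_X P_X^n and α'_Z = Σ_{n≥0} 2^{−n−1} α_Z P_Z^n. Then: (i) α'_X has full support on A and α'_Z has full support on C; (ii) f_*(α'_X) = α'_Z; (iii) MC(α'_X, P_X) =ᵈ (X̄_{t+G})_{t≥0}, where G is a Geometric(1/2) random variable on {0,1,2,…} independent of X̄; and (iv) f(MC(α'_X, P_X)) =ᵈ MC(α'_Z, P_Z). -/

import Mathlib

open MeasureTheory Filter Topology
open scoped ENNReal Classical

/-- A probability vector on a countable state space. -/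
def IsProbVec {U : Type*} (v : U → ℝ≥0∞) : Prop := ∑' u, v u = 1

/-- A row-stochastic matrix on a countable state space. -/
def IsStochastic {U : Type*} (P : U → U → ℝ≥0∞) : Prop := ∀ u, ∑' w, P u w = 1

/-- `μ` is the law of the time-homogeneous Markov chain `MC(v,P)`. -/
def IsMarkovChain {U : Type*} [MeasurableSpace U]
    (v : U → ℝ≥0∞) (P : U → U → ℝ≥0∞) (μ : Measure (ℕ → U)) : Prop :=
  IsProbabilityMeasure μ ∧ IsProbVec v ∧ IsStochastic P ∧
    ∀ (k : ℕ) (a : ℕ → U),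
      μ {ω | ∀ i ≤ k, ω i = a i} = v (a 0) * ∏ i ∈ Finset.range k, P (a i) (a (i + 1))

/-- The iterates `v P^n` of a row vector under a transition matrix. -/
noncomputable def vecIter {U : Type*} (v : U → ℝ≥0∞) (P : U → U → ℝ≥0∞) : ℕ → U → ℝ≥0∞
  | 0 => v
  | n + 1 => fun u' => ∑' u, vecIter v P n u * P u u'

/-- The geometric mixture `α' = Σ_{n ≥ 0} 2^{-n-1} α P^n`. -/
noncomputable def geomMix {U : Type*} (v : U → ℝ≥0∞) (P : U → U → ℝ≥0∞) (u : U) : ℝ≥0∞ :=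
  ∑' n : ℕ, (2 : ℝ≥0∞)⁻¹ ^ (n + 1) * vecIter v P n u

/-!
Summing over the first `n` steps shows that under `MC(α, P)` the shifted path `(X_{t+n})_t` has
the cylinder probabilities of `MC(α Pⁿ, P)`; averaging over `n` with weights `2^{-n-1}` gives
those of `MC(α', P)`, and cylinder probabilities determine the law, whence (iii). Applying `f`
pointwise commutes with shifting and mixing, so `f(MC(α'_X, P_X))` is the same mixture built
from `Z̄`, i.e. `MC(α'_Z, P_Z)`; reading off time `0` gives (ii). Finally
`α'_X(a) ≥ 2^{-t-1} P(X_t = a) > 0`, and (ii) with surjectivity of `f` carries this to `α'_Z`.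
-/

section PathEvents

variable {U : Type*}

def pathEvent (n k : ℕ) (a : ℕ → U) : Set (ℕ → U) := {ω | ∀ i ≤ k, ω (i + n) = a i}

lemma pathEvent_zero (k : ℕ) (a : ℕ → U) : pathEvent 0 k a = {ω | ∀ i ≤ k, ω i = a i} := rfl

lemma eval_preimage_singleton_eq_pathEvent (t : ℕ) (u : U) :
    {ω : ℕ → U | ω t = u} = pathEvent t 0 fun _ => u := by
  ext ω; simp [pathEvent]

def prependPath (b : U) (a : ℕ → U) : ℕ → U
  | 0 => b
  | i + 1 => a i

lemma pathEvent_succ (n k : ℕ) (a : ℕ → U) :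
    pathEvent (n + 1) k a = ⋃ b, pathEvent n (k + 1) (prependPath b a) := by
  ext ω
  simp only [pathEvent, Set.mem_ofPred_eq, Set.mem_iUnion]
  constructor
  · intro h
    refine ⟨ω n, fun i hi => ?_⟩
    cases i with
    | zero => simp [prependPath]
    | succ i => simpa [prependPath, Nat.add_right_comm, Nat.add_assoc] using h i (by omega)
  · rintro ⟨b, h⟩ i hi
    simpa [prependPath, Nat.add_right_comm, Nat.add_assoc] using h (i + 1) (by omega)

lemma pairwise_disjoint_pathEvent_prependPath (n k : ℕ) (a : ℕ → U) :
    Pairwise (Function.onFun Disjoint fun b => pathEvent n (k + 1) (prependPath b a)) := by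
  intro b c hbc
  refine Set.disjoint_left.2 fun ω hb hc => hbc ?_
  simpa [prependPath] using (hb 0 (by omega)).symm.trans (hc 0 (by omega))

variable [MeasurableSpace U] [MeasurableSingletonClass U]

lemma measurableSet_pathEvent (n k : ℕ) (a : ℕ → U) : MeasurableSet (pathEvent n k a) := by
  have : pathEvent n k a = ⋂ i ∈ Finset.range (k + 1), (fun ω : ℕ → U => ω (i + n)) ⁻¹' {a i} := by
    ext ω; simp [pathEvent]
  rw [this]
  exact Finset.measurableSet_biInter _ fun i _ =>
    measurable_pi_apply (i + n) (measurableSet_singleton _)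

end PathEvents

section Cylinders

variable (U : Type*)

def prefixCylinders : Set (Set (ℕ → U)) := {S | ∃ k a, S = pathEvent 0 k a}

variable {U}

lemma isPiSystem_prefixCylinders : IsPiSystem (prefixCylinders U) := by
  suffices ∀ k l (a b : ℕ → U), k ≤ l → (pathEvent 0 k a ∩ pathEvent 0 l b).Nonempty →
      pathEvent 0 k a ∩ pathEvent 0 l b = pathEvent 0 l b by
    rintro _ ⟨k, a, rfl⟩ _ ⟨l, b, rfl⟩ hne
    rcases le_total k l with h | h
    · exact ⟨l, b, this k l a b h hne⟩
    · exact ⟨k, a, Set.inter_comm _ _ ▸ this l k b a h (Set.inter_comm _ _ ▸ hne)⟩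
  rintro k l a b hkl ⟨ω₀, ha, hb⟩
  refine Set.inter_eq_right.2 fun ω hω i hi => ?_
  rw [hω i (hi.trans hkl), ← hb i (hi.trans hkl), ha i hi]

lemma pathEvent_mem_generateFrom_prefixCylinders [Countable U] (n k : ℕ) (a : ℕ → U) :
    MeasurableSet[MeasurableSpace.generateFrom (prefixCylinders U)] (pathEvent n k a) := by
  induction n generalizing k a with
  | zero => exact MeasurableSpace.measurableSet_generateFrom ⟨k, a, rfl⟩
  | succ n ih =>
    rw [pathEvent_succ]
    exact MeasurableSet.iUnion fun b => ih _ _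

lemma generateFrom_prefixCylinders [Countable U] [MeasurableSpace U]
    [MeasurableSingletonClass U] :
    MeasurableSpace.generateFrom (prefixCylinders U) = MeasurableSpace.pi := by
  refine le_antisymm (MeasurableSpace.generateFrom_le ?_) (iSup_le fun n => ?_)
  · rintro _ ⟨k, a, rfl⟩
    exact measurableSet_pathEvent 0 k a
  · rintro _ ⟨s, -, rfl⟩
    have : (fun ω : ℕ → U => ω n) ⁻¹' s = ⋃ u ∈ s, {ω | ω n = u} := by ext; simp
    rw [this]
    exact MeasurableSet.biUnion s.to_countable fun u _ =>
      eval_preimage_singleton_eq_pathEvent n u ▸ pathEvent_mem_generateFrom_prefixCylinders n 0 _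

end Cylinders

namespace IsMarkovChain

variable {U : Type*} [Countable U] [MeasurableSpace U] [MeasurableSingletonClass U]
  {v : U → ℝ≥0∞} {P : U → U → ℝ≥0∞} {μ : Measure (ℕ → U)}

lemma measure_pathEvent (hμ : IsMarkovChain v P μ) (n k : ℕ) (a : ℕ → U) :
    μ (pathEvent n k a) = vecIter v P n (a 0) * ∏ i ∈ Finset.range k, P (a i) (a (i + 1)) := by
  induction n generalizing k a with
  | zero => exact hμ.2.2.2 k a
  | succ n ih =>
    calc μ (pathEvent (n + 1) k a)
        = ∑' b, μ (pathEvent n (k + 1) (prependPath b a)) := by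
          rw [pathEvent_succ, measure_iUnion (pairwise_disjoint_pathEvent_prependPath n k a)
            fun b => measurableSet_pathEvent _ _ _]
      _ = ∑' b, vecIter v P n b * P b (a 0) * ∏ i ∈ Finset.range k, P (a i) (a (i + 1)) := by
          refine tsum_congr fun b => ?_
          rw [ih, Finset.prod_range_succ']
          simp only [prependPath]
          ring
      _ = vecIter v P (n + 1) (a 0) * ∏ i ∈ Finset.range k, P (a i) (a (i + 1)) :=
          ENNReal.tsum_mul_right

lemma measure_eval_eq (hμ : IsMarkovChain v P μ) (t : ℕ) (u : U) :
    μ {ω | ω t = u} = vecIter v P t u := by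
  simp [eval_preimage_singleton_eq_pathEvent, hμ.measure_pathEvent]

lemma ext {ν : Measure (ℕ → U)}
    (hμ : IsMarkovChain v P μ) (hν : IsMarkovChain v P ν) : μ = ν := by
  have := hμ.1
  refine ext_of_generate_finite _ generateFrom_prefixCylinders.symm isPiSystem_prefixCylinders
    ?_ (by simp [hμ.1.measure_univ, hν.1.measure_univ])
  rintro _ ⟨k, a, rfl⟩
  rw [hμ.measure_pathEvent, hν.measure_pathEvent]

end IsMarkovChain

lemma tsum_inv_two_pow_succ : ∑' n : ℕ, (2 : ℝ≥0∞)⁻¹ ^ (n + 1) = 1 := by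
  rw [ENNReal.tsum_geometric_add_one, ENNReal.one_sub_inv_two, inv_inv,
    ENNReal.inv_mul_cancel two_ne_zero ENNReal.ofNat_ne_top]

section GeometricMixture

variable {U : Type*} {v : U → ℝ≥0∞} {P : U → U → ℝ≥0∞}

lemma tsum_vecIter (hv : IsProbVec v) (hP : IsStochastic P) (n : ℕ) :
    ∑' u, vecIter v P n u = 1 := by
  induction n with
  | zero => exact hv
  | succ n ih =>
    calc ∑' u', ∑' u, vecIter v P n u * P u u'
        = ∑' u, vecIter v P n u * ∑' u', P u u' := by
          rw [ENNReal.tsum_comm]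
          exact tsum_congr fun u => ENNReal.tsum_mul_left
      _ = 1 := by simp only [hP _, mul_one, ih]

lemma IsProbVec.geomMix (hv : IsProbVec v) (hP : IsStochastic P) : IsProbVec (geomMix v P) := by
  simp only [IsProbVec, _root_.geomMix]
  rw [ENNReal.tsum_comm]
  simp only [ENNReal.tsum_mul_left, tsum_vecIter hv hP, mul_one, tsum_inv_two_pow_succ]

lemma geomMix_ne_zero {u : U} {t : ℕ} (ht : vecIter v P t u ≠ 0) : geomMix v P u ≠ 0 :=
  ne_of_gt <| lt_of_lt_of_le
    (ENNReal.mul_pos (pow_ne_zero _ (ENNReal.inv_ne_zero.2 ENNReal.ofNat_ne_top)) ht)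
    (ENNReal.le_tsum t)

end GeometricMixture

/-- The law of the path `(X_{t+G})_t` for `X ~ μ` and an independent `G ~ Geometric(1/2)`. -/
noncomputable def geomShiftMix {U : Type*} [MeasurableSpace U] (μ : Measure (ℕ → U)) :
    Measure (ℕ → U) :=
  Measure.sum fun n : ℕ => ((2 : ℝ≥0∞)⁻¹ ^ (n + 1)) • μ.map fun ω t => ω (t + n)

section GeomShiftMix

variable {U : Type*} [MeasurableSpace U]

lemma measurable_shift (n : ℕ) : Measurable fun (ω : ℕ → U) t => ω (t + n) :=
  measurable_pi_lambda _ fun _ => measurable_pi_apply _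

lemma geomShiftMix_apply (μ : Measure (ℕ → U)) {s : Set (ℕ → U)} (hs : MeasurableSet s) :
    geomShiftMix μ s = ∑' n : ℕ, (2 : ℝ≥0∞)⁻¹ ^ (n + 1) * μ ((fun ω t => ω (t + n)) ⁻¹' s) := by
  simp only [geomShiftMix, Measure.sum_apply _ hs, Measure.smul_apply,
    Measure.map_apply (measurable_shift _) hs, smul_eq_mul]

lemma map_geomShiftMix {C : Type*} [MeasurableSpace C] {f : U → C} (hf : Measurable f)
    (μ : Measure (ℕ → U)) :
    (geomShiftMix μ).map (fun ω n => f (ω n)) = geomShiftMix (μ.map fun ω n => f (ω n)) := by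
  have hF : Measurable fun (ω : ℕ → U) n => f (ω n) :=
    measurable_pi_lambda _ fun n => hf.comp (measurable_pi_apply n)
  simp only [geomShiftMix, Measure.map_sum hF.aemeasurable, Measure.map_smul,
    Measure.map_map hF (measurable_shift _), Measure.map_map (measurable_shift _) hF]
  rfl

lemma IsMarkovChain.geomShiftMix [Countable U] [MeasurableSingletonClass U]
    {v : U → ℝ≥0∞} {P : U → U → ℝ≥0∞} {μ : Measure (ℕ → U)} (hμ : IsMarkovChain v P μ) :
    IsMarkovChain (geomMix v P) P (geomShiftMix μ) := by
  have := hμ.1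
  refine ⟨⟨?_⟩, hμ.2.1.geomMix hμ.2.2.1, hμ.2.2.1, fun k a => ?_⟩
  · simp [geomShiftMix_apply _ MeasurableSet.univ, tsum_inv_two_pow_succ]
  · rw [← pathEvent_zero, geomShiftMix_apply _ (measurableSet_pathEvent 0 k a), geomMix,
      ← ENNReal.tsum_mul_right]
    refine tsum_congr fun n => ?_
    rw [mul_assoc, ← hμ.measure_pathEvent]
    rfl

lemma IsMarkovChain.tsum_fiber_eq [Countable U] [MeasurableSingletonClass U]
    {C : Type*} [Countable C] [MeasurableSpace C] [MeasurableSingletonClass C] {f : U → C}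
    {v : U → ℝ≥0∞} {P : U → U → ℝ≥0∞} {w : C → ℝ≥0∞} {Q : C → C → ℝ≥0∞}
    {μ : Measure (ℕ → U)} (hμ : IsMarkovChain v P μ)
    (hfμ : IsMarkovChain w Q (μ.map fun ω n => f (ω n))) (c : C) :
    ∑' a : {x // f x = c}, v a = w c := by
  have hF : Measurable fun (ω : ℕ → U) n => f (ω n) :=
    measurable_pi_lambda _ fun n => (measurable_of_countable f).comp (measurable_pi_apply n)
  calc ∑' a : {x // f x = c}, v a
      = ∑' a : f ⁻¹' {c}, μ ((fun ω => ω 0) ⁻¹' {a.1}) :=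
        tsum_congr fun a => (hμ.measure_eval_eq 0 a).symm
    _ = μ ((fun ω => ω 0) ⁻¹' (f ⁻¹' {c})) :=
        tsum_measure_preimage_singleton (Set.to_countable _)
          fun a _ => measurable_pi_apply 0 (measurableSet_singleton a)
    _ = (μ.map fun ω n => f (ω n)) {ξ | ξ 0 = c} :=
        (Measure.map_apply hF (measurable_pi_apply 0 (measurableSet_singleton c))).symm
    _ = w c := hfμ.measure_eval_eq 0 c

end GeomShiftMix

/-- **Alternative initial distributions.** With `α'_X = Σ_n 2^{-n-1} α_X P_X^n` and
`α'_Z = Σ_n 2^{-n-1} α_Z P_Z^n`: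
(i) `α'_X` has full support on `A` and `α'_Z` has full support on `C`;
(ii) `f_*(α'_X) = α'_Z`;
(iii) `MC(α'_X, P_X)` is equal in law to `(X̄_{t+G})_{t ≥ 0}` where `G` is a Geometric(1/2)
random variable independent of `X̄`, i.e. its law is the mixture
`Σ_n 2^{-n-1} · (law of (X̄_{t+n})_t)`;
(iv) `f(MC(α'_X, P_X))` is equal in law to `MC(α'_Z, P_Z)`. -/
theorem statement_15
    {A C : Type*} [Countable A] [Countable C]
    [MeasurableSpace A] [MeasurableSingletonClass A]
    [MeasurableSpace C] [MeasurableSingletonClass C]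
    (αX : A → ℝ≥0∞) (PX : A → A → ℝ≥0∞) (μX : Measure (ℕ → A))
    (αZ : C → ℝ≥0∞) (PZ : C → C → ℝ≥0∞) (μZ : Measure (ℕ → C))
    (f : A → C) (hfsurj : Function.Surjective f)
    (hX : IsMarkovChain αX PX μX) (hZ : IsMarkovChain αZ PZ μZ)
    (hfX : μX.map (fun ω n => f (ω n)) = μZ)
    (hAvis : ∀ a : A, ∃ t : ℕ, μX {ω | ω t = a} ≠ 0) :
    (∀ a : A, geomMix αX PX a ≠ 0) ∧
    (∀ c : C, geomMix αZ PZ c ≠ 0) ∧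
    (∀ c : C, ∑' a : {x : A // f x = c}, geomMix αX PX a.1 = geomMix αZ PZ c) ∧
    (∀ μ' : Measure (ℕ → A), IsMarkovChain (geomMix αX PX) PX μ' →
      μ' = Measure.sum (fun n : ℕ =>
        ((2 : ℝ≥0∞)⁻¹ ^ (n + 1)) • μX.map (fun ω t => ω (t + n)))) ∧
    (∀ μ' : Measure (ℕ → A), IsMarkovChain (geomMix αX PX) PX μ' →
      IsMarkovChain (geomMix αZ PZ) PZ (μ'.map (fun ω n => f (ω n)))) := by
  have hmixX := hX.geomShiftMix
  have hmixZ : IsMarkovChain (geomMix αZ PZ) PZ ((geomShiftMix μX).map fun ω n => f (ω n)) := by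
    rw [map_geomShiftMix (measurable_of_countable f), hfX]
    exact hZ.geomShiftMix
  have hfiber := hmixX.tsum_fiber_eq hmixZ
  have hsuppX (a : A) : geomMix αX PX a ≠ 0 := by
    obtain ⟨t, ht⟩ := hAvis a
    exact geomMix_ne_zero (hX.measure_eval_eq t a ▸ ht)
  refine ⟨hsuppX, fun c => ?_, hfiber, fun μ' hμ' => hμ'.ext hmixX,
    fun μ' hμ' => hμ'.ext hmixX ▸ hmixZ⟩
  obtain ⟨a, rfl⟩ := hfsurj c
  rw [← hfiber]
  exact ne_bot_of_le_ne_bot (hsuppX a) (ENNReal.le_tsum (⟨a, rfl⟩ : {x // f x = f a}))
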